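/- For every natural number m and all real numbers x and z, the coefficient of t^m in the formal power series (1+t)^x / (1 + t(z+1)) equals Σ_{n=0}^{m} (-1)^n · C(y+n(z+1), n) · C(x+y+nz, m-n) for every real y; in particular this sum is independent of y. -/

import Mathlib

open Finset PowerSeries

/-- Generalized binomial coefficient `C(x, k) = x(x-1)⋯(x-k+1)/k!` for real `x`. -/
noncomputable def gchoose (x : ℝ) (k : ℕ) : ℝ :=
  (∏ i ∈ Finset.range k, (x - i)) / (Nat.factorial k)

/-- The binomial series `(1+t)^x = Σ C(x,k) t^k` as a formal power series. -/
noncomputable def binomSeries (x : ℝ) : PowerSeries ℝ :=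
  PowerSeries.mk fun k => gchoose x k

/-!
Write `S_m(y)` for the alternating sum and `G` for `(1+t)^x / (1+(z+1)t)`. Pascal's rule in both
factors gives `S_{m+1}(y+1) - S_{m+1}(y) = S_m(y) - S_m(y+z+1)`, so once `S_m` is constant,
`S_{m+1}` is a polynomial in `y` of period 1, hence constant as well. At `y = 0` absorption,
`C(k(z+1), k) = (z+1) C(z+(k-1)(z+1), k-1)`, turns this into
`S_{m+1} = C(x, m+1) - (z+1) S_m`, the recurrence read off from `(1+(z+1)t) G = (1+t)^x`.
-/

theorem gchoose_eq_choose (x : ℝ) (k : ℕ) : gchoose x k = Ring.choose x k := by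
  rw [Ring.choose_eq_smul, ← Polynomial.aeval_eq_smeval, Polynomial.aeval_def,
    Polynomial.eval₂_eq_eval_map, descPochhammer_map, descPochhammer_eval_eq_prod_range,
    smul_eq_mul, gchoose, div_eq_inv_mul]

theorem Polynomial.eval_eq_eval_zero_of_periodic {R : Type*} [CommRing R] [IsDomain R]
    [CharZero R] {p : Polynomial R} (h : Function.Periodic p.eval 1) (t : R) :
    p.eval t = p.eval 0 := by
  have h_nat : ∀ n : ℕ, p.eval (n : R) = p.eval 0 := fun n => by
    simpa using h.nat_mul_eq n
  have h_const : p = Polynomial.C (p.eval 0) := by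
    refine Polynomial.eq_of_infinite_eval_eq _ _ <|
      (Set.infinite_range_of_injective Nat.cast_injective).mono ?_
    rintro _ ⟨n, rfl⟩
    simp [h_nat]
  rw [h_const, Polynomial.eval_C, Polynomial.eval_C]

namespace Ring

variable {R : Type*} [CommRing R] [BinomialRing R]

theorem choose_succ_mul (b : R) (n : ℕ) :
    choose ((n + 1) * b) (n + 1) = b * choose ((n + 1) * b - 1) n := by
  have := BinomialRing.toIsAddTorsionFree (R := R)
  have h := choose_smul_choose ((n + 1) * b) (Nat.le_add_left 1 n)
  rw [Nat.choose_one_right, choose_one_right, Nat.cast_one, Nat.add_sub_cancel] at h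
  rw [← nsmul_right_inj (Nat.succ_ne_zero n), h, nsmul_eq_mul]
  push_cast
  ring

end Ring

section BinomialRing

variable {R : Type*} [CommRing R] [BinomialRing R]

def altChooseSum (x y z : R) (m : ℕ) : R :=
  ∑ n ∈ range (m + 1),
    (-1) ^ n * Ring.choose (y + n * (z + 1)) n * Ring.choose (x + y + n * z) (m - n)

theorem map_altChooseSum {S : Type*} [CommRing S] [BinomialRing S] (f : R →+* S)
    (x y z : R) (m : ℕ) : f (altChooseSum x y z m) = altChooseSum (f x) (f y) (f z) m := by
  simp [altChooseSum, Ring.map_choose]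

theorem altChooseSum_zero (x y z : R) : altChooseSum x y z 0 = 1 := by
  simp [altChooseSum]

theorem altChooseSum_add_one_sub (x y z : R) (m : ℕ) :
    altChooseSum x (y + 1) z (m + 1) - altChooseSum x y z (m + 1) =
      altChooseSum x y z m - altChooseSum x (y + (z + 1)) z m := by
  set u : R → ℕ → R := fun w n => Ring.choose (w + n * (z + 1)) n
  set v : R → ℕ → R := fun w n => Ring.choose (x + w + n * z) (m + 1 - n)
  have hu : ∀ n : ℕ, u (y + 1) (n + 1) - u y (n + 1) = u (y + (z + 1)) n := fun n => by
    simp only [u, Nat.cast_succ]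
    rw [show y + 1 + (n + 1) * (z + 1) = y + (n + 1) * (z + 1) + 1 by ring,
      Ring.choose_succ_succ, add_sub_cancel_right]
    ring_nf
  have hv : ∀ n ≤ m, v (y + 1) n - v y n = Ring.choose (x + y + n * z) (m - n) := fun n hn => by
    simp only [v]
    rw [show m + 1 - n = m - n + 1 by omega, show x + (y + 1) + n * z = x + y + n * z + 1 by ring,
      Ring.choose_succ_succ, add_sub_cancel_right]
  have split : altChooseSum x (y + 1) z (m + 1) - altChooseSum x y z (m + 1) =
      ∑ n ∈ range (m + 2), (-1) ^ n * (u (y + 1) n - u y n) * v (y + 1) n +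
        ∑ n ∈ range (m + 2), (-1) ^ n * u y n * (v (y + 1) n - v y n) := by
    simp only [altChooseSum, ← sum_sub_distrib, ← sum_add_distrib]
    exact sum_congr rfl fun n _ => by ring
  have h_first : ∑ n ∈ range (m + 2), (-1) ^ n * (u (y + 1) n - u y n) * v (y + 1) n =
      -altChooseSum x (y + (z + 1)) z m := by
    have h_zero : u (y + 1) 0 - u y 0 = 0 := by simp [u]
    rw [sum_range_succ', h_zero, mul_zero, zero_mul, add_zero, altChooseSum,
      ← Finset.sum_neg_distrib]
    refine sum_congr rfl fun n _ => ?_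
    rw [hu]
    simp only [u, v, Nat.add_sub_add_right, Nat.cast_succ]
    rw [show x + (y + 1) + (n + 1) * z = x + (y + (z + 1)) + n * z by ring]
    ring
  have h_second : ∑ n ∈ range (m + 2), (-1) ^ n * u y n * (v (y + 1) n - v y n) =
      altChooseSum x y z m := by
    rw [sum_range_succ, altChooseSum]
    simp only [v, Nat.sub_self, Ring.choose_zero_right, sub_self, mul_zero, add_zero]
    refine sum_congr rfl fun n hn => ?_
    rw [hv n (Nat.lt_succ_iff.mp (mem_range.mp hn))]
  rw [split, h_first, h_second]
  ring

theorem altChooseSum_zero_succ (x z : R) (m : ℕ) :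
    altChooseSum x 0 z (m + 1) = Ring.choose x (m + 1) - (z + 1) * altChooseSum x z z m := by
  rw [altChooseSum, sum_range_succ', altChooseSum, mul_sum]
  simp only [zero_add, Nat.cast_zero, zero_mul, add_zero, pow_zero, one_mul,
    Ring.choose_zero_right, Nat.sub_zero]
  rw [add_comm, sub_eq_add_neg, ← sum_neg_distrib]
  congr 1
  refine sum_congr rfl fun n _ => ?_
  rw [Nat.cast_succ, Ring.choose_succ_mul, Nat.add_sub_add_right]
  ring_nf

end BinomialRing

theorem altChooseSum_eq_of_periodic {K : Type*} [Field K] [CharZero K] {x z : K} {m : ℕ}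
    (h : Function.Periodic (fun y => altChooseSum x y z m) 1) (y : K) :
    altChooseSum x y z m = altChooseSum x 0 z m := by
  have h_eval : ∀ t, (altChooseSum (Polynomial.C x) Polynomial.X (Polynomial.C z) m).eval t =
      altChooseSum x t z m := fun t => by
    simpa using map_altChooseSum (Polynomial.evalRingHom t) (Polynomial.C x) Polynomial.X
      (Polynomial.C z) m
  rw [← h_eval, ← h_eval]
  exact Polynomial.eval_eq_eval_zero_of_periodic (fun t => by simp only [h_eval]; exact h t) y

namespace PowerSeries

variable {K : Type*} [Field K]

theorem coeff_succ_mul_inv_one_add_C_mul_X (f : K⟦X⟧) (b : K) (m : ℕ) :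
    coeff (m + 1) (f * (1 + C b * X)⁻¹) =
      coeff (m + 1) f - b * coeff m (f * (1 + C b * X)⁻¹) := by
  set g := f * (1 + C b * X)⁻¹
  have h_mul : g * (1 + C b * X) = f := by
    rw [mul_assoc, PowerSeries.inv_mul_cancel _ (by simp), mul_one]
  have h_coeff : coeff (m + 1) (g * (1 + C b * X)) = coeff (m + 1) g + b * coeff m g := by
    rw [mul_add, mul_one, mul_left_comm, ← mul_assoc, map_add, coeff_succ_mul_X, coeff_C_mul]
  rw [h_mul] at h_coeff
  rw [h_coeff, add_sub_cancel_right]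

end PowerSeries

theorem coeff_binom_div_linear (m : ℕ) (x z : ℝ) : ∀ y : ℝ,
    PowerSeries.coeff m
        (binomSeries x * (1 + PowerSeries.C (z + 1) * PowerSeries.X)⁻¹) =
      ∑ n ∈ Finset.range (m + 1),
        (-1 : ℝ) ^ n * gchoose (y + n * (z + 1)) n * gchoose (x + y + n * z) (m - n) := by
  simp only [gchoose_eq_choose]
  change ∀ y, _ = altChooseSum x y z m
  induction m with
  | zero => simp [altChooseSum_zero, binomSeries, gchoose_eq_choose]
  | succ m ih =>
    have h_periodic : Function.Periodic (fun y => altChooseSum x y z (m + 1)) 1 := fun y => by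
      rw [← sub_eq_zero, altChooseSum_add_one_sub, ← ih, ← ih, sub_self]
    intro y
    rw [altChooseSum_eq_of_periodic h_periodic, altChooseSum_zero_succ, ← ih z,
      coeff_succ_mul_inv_one_add_C_mul_X]
    simp [binomSeries, gchoose_eq_choose]
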